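/- arXiv:1906.01956 — 2 statements merged into one kernel-verified Lean document; each statement's English description precedes it below -/
import Mathlib

section
/- Let 1 < a < 2. There exists a constant c = c(a) > 0 such that for all nonzero integers ξ₁, ξ₂, ξ₃ with ξ₁ + ξ₂ + ξ₃ = 0 one has |φ_a(ξ₁) + φ_a(ξ₂) + φ_a(ξ₃)| ≥ c · (max(|ξ₁|,|ξ₂|,|ξ₃|))^a · min(|ξ₁|,|ξ₂|,|ξ₃|). In particular the first resonance function Ω₁^a(ξ₁,ξ₂,ξ₃) = ξ₁|ξ₁|^a + ξ₂|ξ₂|^a + ξ₃|ξ₃|^a does not vanish when all ξᵢ are nonzero. -/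
open Real MeasureTheory

noncomputable section

/-- The dispersion relation `φ_a(ξ) = ξ|ξ|^a`. -/
def phi (a : ℝ) (ξ : ℤ) : ℝ := (ξ : ℝ) * |(ξ : ℝ)| ^ a

/-- The region `D^a_{k,≤j}` of frequency `~2^k` and modulation `≲ 2^j`. -/
def Dle (a : ℝ) (k j : ℕ) : Set (ℤ × ℝ) :=
  {p | (2:ℝ) ^ ((k:ℝ) - 1) ≤ |(p.1 : ℝ)| ∧ |(p.1 : ℝ)| ≤ (2:ℝ) ^ ((k:ℝ) + 1) ∧
       |p.2 - phi a p.1| ≤ (2:ℝ) ^ ((j:ℝ) + 1)}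

/-- The region `D^a_{k,j}` of frequency `~2^k` and modulation `~2^j`. -/
def Deq (a : ℝ) (k j : ℕ) : Set (ℤ × ℝ) :=
  {p | (2:ℝ) ^ ((k:ℝ) - 1) ≤ |(p.1 : ℝ)| ∧ |(p.1 : ℝ)| ≤ (2:ℝ) ^ ((k:ℝ) + 1) ∧
       (2:ℝ) ^ ((j:ℝ) - 1) ≤ |p.2 - phi a p.1| ∧ |p.2 - phi a p.1| ≤ (2:ℝ) ^ ((j:ℝ) + 1)}

/-- The `L²(ℤ×ℝ)` norm `(Σ_ξ ∫ f(ξ,τ)² dτ)^{1/2}`. -/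
def l2 (f : ℤ × ℝ → ℝ) : ℝ :=
  Real.sqrt (∑' ξ : ℤ, ∫ τ : ℝ, (f (ξ, τ))^2)

/-- The convolution `(f₁ * f₂)(ξ,τ) = Σ_{ξ₁} ∫ f₁(ξ₁,τ₁) f₂(ξ−ξ₁,τ−τ₁) dτ₁`. -/
def conv2 (f₁ f₂ : ℤ × ℝ → ℝ) : ℤ × ℝ → ℝ :=
  fun p => ∑' ξ₁ : ℤ, ∫ τ₁ : ℝ, f₁ (ξ₁, τ₁) * f₂ (p.1 - ξ₁, p.2 - τ₁)

/-- The trilinear convolution form `I₃`. -/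
def I3 (f₁ f₂ f₃ : ℤ × ℝ → ℝ) : ℝ :=
  ∑' ξ₁ : ℤ, ∑' ξ₂ : ℤ, ∫ τ₁ : ℝ, ∫ τ₂ : ℝ,
    f₁ (ξ₁, τ₁) * f₂ (ξ₂, τ₂) * f₃ (-ξ₁ - ξ₂, -τ₁ - τ₂)

/-- The quadrilinear convolution form `I₄`. -/
def I4 (f₁ f₂ f₃ f₄ : ℤ × ℝ → ℝ) : ℝ :=
  ∑' ξ₁ : ℤ, ∑' ξ₂ : ℤ, ∑' ξ₃ : ℤ, ∫ τ₁ : ℝ, ∫ τ₂ : ℝ, ∫ τ₃ : ℝ,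
    f₁ (ξ₁, τ₁) * f₂ (ξ₂, τ₂) * f₃ (ξ₃, τ₃) * f₄ (-ξ₁ - ξ₂ - ξ₃, -τ₁ - τ₂ - τ₃)

/-- Third largest (= second smallest) of four elements of a linear order. -/
def thirdLargest {α : Type*} [LinearOrder α] (v₁ v₂ v₃ v₄ : α) : α :=
  min (min (min (max v₁ v₂) (max v₁ v₃)) (min (max v₁ v₄) (max v₂ v₃)))
      (min (max v₂ v₄) (max v₃ v₄))

/-- Fourth largest (= smallest) of four elements of a linear order. -/
def fourthLargest {α : Type*} [LinearOrder α] (v₁ v₂ v₃ v₄ : α) : α :=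
  min (min v₁ v₂) (min v₃ v₄)

lemma core_aux (a s t : ℝ) (ha : 1 ≤ a) (hs : 0 < s) (ht : 0 < t) (hts : t ≤ s) :
    (1/2) * (s+t)^a * t ≤ (s+t)*(s+t)^a - s*s^a - t*t^a := by
  have hst : (0:ℝ) < s + t := by linarith
  have h1 : s^a ≤ (s+t)^a := Real.rpow_le_rpow hs.le (by linarith) (by linarith)
  have h2 : t^a ≤ ((s+t)/2)^a := Real.rpow_le_rpow ht.le (by linarith) (by linarith)
  have h3 : ((s+t)/2)^a = (s+t)^a / 2^a := Real.div_rpow hst.le (by norm_num : (0:ℝ) ≤ 2) a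
  have h4 : (2:ℝ) ≤ 2^a := by
    calc (2:ℝ) = 2^(1:ℝ) := (Real.rpow_one 2).symm
    _ ≤ 2^a := Real.rpow_le_rpow_of_exponent_le one_le_two ha
  have h5 : (s+t)^a / 2^a ≤ (s+t)^a / 2 :=
    div_le_div_of_nonneg_left (Real.rpow_nonneg hst.le a) two_pos h4
  have h6 : t^a ≤ (s+t)^a/2 := by linarith
  have e1 : s*s^a ≤ s*(s+t)^a := mul_le_mul_of_nonneg_left h1 hs.le
  have e2 : t*t^a ≤ t*((s+t)^a/2) := mul_le_mul_of_nonneg_left h6 ht.le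
  nlinarith [Real.rpow_nonneg hst.le a]

lemma core (a s t : ℝ) (ha : 1 ≤ a) (hs : 0 < s) (ht : 0 < t) :
    (1/2) * (s+t)^a * min s t ≤ (s+t)*(s+t)^a - s*s^a - t*t^a := by
  rcases le_total t s with h | h
  · rw [min_eq_right h]; exact core_aux a s t ha hs ht h
  · rw [min_eq_left h]
    have := core_aux a t s ha ht hs h
    rw [add_comm s t]; linarith

def Bnd (a : ℝ) (x y z : ℤ) : Prop :=
  1/2 * (max |(x:ℝ)| (max |(y:ℝ)| |(z:ℝ)|)) ^ a *
      (min |(x:ℝ)| (min |(y:ℝ)| |(z:ℝ)|))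
    ≤ |phi a x + phi a y + phi a z|

lemma Bnd_swap {a : ℝ} {x y z : ℤ} (h : Bnd a x y z) : Bnd a y x z := by
  unfold Bnd at *
  rw [max_left_comm, min_left_comm,
    show phi a y + phi a x + phi a z = phi a x + phi a y + phi a z from by ring]
  exact h

lemma Bnd_rot {a : ℝ} {x y z : ℤ} (h : Bnd a x y z) : Bnd a z x y := by
  unfold Bnd at *
  rw [max_comm |(z:ℝ)| (max |(x:ℝ)| |(y:ℝ)|), max_assoc,
      min_comm |(z:ℝ)| (min |(x:ℝ)| |(y:ℝ)|), min_assoc,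
    show phi a z + phi a x + phi a y = phi a x + phi a y + phi a z from by ring]
  exact h

lemma keyP (a : ℝ) (ha : 1 ≤ a) (x y z : ℤ) (hx : 0 < x) (hy : 0 < y)
    (h : x + y + z = 0) : Bnd a x y z := by
  have hz : z = -x - y := by omega
  subst hz
  have hs : (0:ℝ) < (x:ℝ) := by exact_mod_cast hx
  have ht : (0:ℝ) < (y:ℝ) := by exact_mod_cast hy
  have hxa : |(x:ℝ)| = (x:ℝ) := abs_of_pos hs
  have hya : |(y:ℝ)| = (y:ℝ) := abs_of_pos ht
  have hza : |((-x - y : ℤ):ℝ)| = (x:ℝ) + (y:ℝ) := by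
    push_cast
    rw [abs_of_nonpos (by linarith)]; ring
  unfold Bnd phi
  push_cast
  rw [show |(-(x:ℝ) - (y:ℝ))| = (x:ℝ)+(y:ℝ) from by
    rw [abs_of_nonpos (by linarith)]; ring]
  rw [hxa, hya]
  rw [show max (x:ℝ) (max (y:ℝ) ((x:ℝ)+(y:ℝ))) = (x:ℝ)+(y:ℝ) from by
    rw [max_eq_right (by linarith : (y:ℝ) ≤ (x:ℝ)+(y:ℝ)),
        max_eq_right (by linarith : (x:ℝ) ≤ (x:ℝ)+(y:ℝ))]]
  rw [show min (x:ℝ) (min (y:ℝ) ((x:ℝ)+(y:ℝ))) = min (x:ℝ) (y:ℝ) from by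
    rw [min_eq_left (by linarith : (y:ℝ) ≤ (x:ℝ)+(y:ℝ))]]
  have hcore := core a (x:ℝ) (y:ℝ) ha hs ht
  have habs : -((x:ℝ) * (x:ℝ)^a + (y:ℝ)*(y:ℝ)^a + (-(x:ℝ)-(y:ℝ)) * ((x:ℝ)+(y:ℝ))^a)
      ≤ |(x:ℝ) * (x:ℝ)^a + (y:ℝ)*(y:ℝ)^a + (-(x:ℝ)-(y:ℝ)) * ((x:ℝ)+(y:ℝ))^a| :=
    neg_le_abs _
  linarith [habs, hcore]

lemma phi_neg (a : ℝ) (ξ : ℤ) : phi a (-ξ) = - phi a ξ := by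
  unfold phi; push_cast; rw [abs_neg]; ring

lemma keyN (a : ℝ) (ha : 1 ≤ a) (x y z : ℤ) (hx : x < 0) (hy : y < 0)
    (h : x + y + z = 0) : Bnd a x y z := by
  have h' := keyP a ha (-x) (-y) (-z) (by omega) (by omega) (by omega)
  unfold Bnd at h' ⊢
  rw [phi_neg, phi_neg, phi_neg] at h'
  push_cast at h'
  rw [abs_neg, abs_neg, abs_neg] at h'
  rw [show -phi a x + -phi a y + -phi a z = -(phi a x + phi a y + phi a z) from by ring,
      abs_neg] at h'
  exact h'


/-- Lower bound for the first resonance function `Ω₁^a` on the circle: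
for `1 < a < 2` there is `c = c(a) > 0` with
`|φ_a(ξ₁) + φ_a(ξ₂) + φ_a(ξ₃)| ≥ c · |ξ_max|^a · |ξ_min|` for nonzero integers
summing to zero; in particular the resonance does not vanish. -/
theorem first_resonance_lower_bound (a : ℝ) (ha1 : 1 < a) (ha2 : a < 2) :
    ∃ c : ℝ, 0 < c ∧ ∀ ξ₁ ξ₂ ξ₃ : ℤ, ξ₁ ≠ 0 → ξ₂ ≠ 0 → ξ₃ ≠ 0 → ξ₁ + ξ₂ + ξ₃ = 0 →
      c * (max |(ξ₁:ℝ)| (max |(ξ₂:ℝ)| |(ξ₃:ℝ)|)) ^ a *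
          (min |(ξ₁:ℝ)| (min |(ξ₂:ℝ)| |(ξ₃:ℝ)|))
        ≤ |phi a ξ₁ + phi a ξ₂ + phi a ξ₃| ∧
      phi a ξ₁ + phi a ξ₂ + phi a ξ₃ ≠ 0 := by
  have ha : 1 ≤ a := ha1.le
  refine ⟨1/2, by norm_num, ?_⟩
  intro ξ₁ ξ₂ ξ₃ h1 h2 h3 hsum
  have hB : Bnd a ξ₁ ξ₂ ξ₃ := by
    rcases lt_or_gt_of_ne h1 with p1 | p1 <;>
    rcases lt_or_gt_of_ne h2 with p2 | p2 <;>
    rcases lt_or_gt_of_ne h3 with p3 | p3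
    · exact absurd hsum (by omega)
    · exact keyN a ha ξ₁ ξ₂ ξ₃ p1 p2 hsum
    · -- ξ₁<0, ξ₂>0, ξ₃<0 : pair (1,3)
      exact Bnd_swap (Bnd_rot (keyN a ha ξ₁ ξ₃ ξ₂ p1 p3 (by omega)))
    · -- ξ₁<0, ξ₂>0, ξ₃>0 : pair (2,3)
      exact Bnd_rot (keyP a ha ξ₂ ξ₃ ξ₁ p2 p3 (by omega))
    · -- ξ₁>0, ξ₂<0, ξ₃<0 : pair (2,3)
      exact Bnd_rot (keyN a ha ξ₂ ξ₃ ξ₁ p2 p3 (by omega))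
    · -- ξ₁>0, ξ₂<0, ξ₃>0 : pair (1,3)
      exact Bnd_swap (Bnd_rot (keyP a ha ξ₁ ξ₃ ξ₂ p1 p3 (by omega)))
    · exact keyP a ha ξ₁ ξ₂ ξ₃ p1 p2 hsum
    · exact absurd hsum (by omega)
  refine ⟨hB, ?_⟩
  have e1 : (1:ℝ) ≤ |(ξ₁:ℝ)| := by exact_mod_cast Int.one_le_abs h1
  have e2 : (1:ℝ) ≤ |(ξ₂:ℝ)| := by exact_mod_cast Int.one_le_abs h2
  have e3 : (1:ℝ) ≤ |(ξ₃:ℝ)| := by exact_mod_cast Int.one_le_abs h3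
  have hmax : (1:ℝ) ≤ max |(ξ₁:ℝ)| (max |(ξ₂:ℝ)| |(ξ₃:ℝ)|) := le_max_of_le_left e1
  have hmin : (1:ℝ) ≤ min |(ξ₁:ℝ)| (min |(ξ₂:ℝ)| |(ξ₃:ℝ)|) := by
    simp [le_min_iff, e1, e2, e3]
  have hpow : (1:ℝ) ≤ (max |(ξ₁:ℝ)| (max |(ξ₂:ℝ)| |(ξ₃:ℝ)|)) ^ a := by
    calc (1:ℝ) = 1 ^ a := (Real.one_rpow a).symm
    _ ≤ _ := Real.rpow_le_rpow zero_le_one hmax (by linarith)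
  have hpos : (0:ℝ) < 1/2 * (max |(ξ₁:ℝ)| (max |(ξ₂:ℝ)| |(ξ₃:ℝ)|)) ^ a *
      (min |(ξ₁:ℝ)| (min |(ξ₂:ℝ)| |(ξ₃:ℝ)|)) := by nlinarith
  intro hzero
  rw [Bnd] at hB
  rw [hzero, abs_zero] at hB
  linarith
end
end

section
/- (Multiplier bound for the first symmetrization) Let 1 < a < 2 and B > 0. Let m : ℝ → (0,∞) be a smooth even function satisfying the symbol regularity condition |m′(ξ)| ≤ B (1+ξ²)^{−1/2} m(ξ) for all ξ ∈ ℝ. Define b₃(ξ₁,ξ₂,ξ₃) = (m(ξ₁)ξ₁ + m(ξ₂)ξ₂ + m(ξ₃)ξ₃) / (ξ₁|ξ₁|^a + ξ₂|ξ₂|^a + ξ₃|ξ₃|^a). Then there exists a constant C = C(a,B) such that for all nonzero integers ξ₁, ξ₂, ξ₃ with ξ₁ + ξ₂ + ξ₃ = 0 and |ξ₃| ≤ |ξ₂| ≤ |ξ₁| ≤ 4|ξ₂|, one has |b₃(ξ₁,ξ₂,ξ₃)| ≤ C · max(m(ξ₁), m(ξ₂), m(ξ₃)) / |ξ₁|^a.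 -/
open Real MeasureTheory

noncomputable section

private lemma rpow_decay {s y : ℝ} (hy : 0 < y) (hsy : y ≤ s) :
    (1 + s ^ 2) ^ (-(1:ℝ)/2) ≤ 1 / y := by
  have hs : 0 < s := hy.trans_le hsy
  have hle : y ≤ (1 + s ^ 2) ^ ((1:ℝ)/2) := by
    calc y ≤ s := hsy
      _ = (s ^ 2) ^ ((1:ℝ)/2) := by
          rw [← Real.rpow_natCast s 2, ← Real.rpow_mul hs.le]; norm_num
      _ ≤ (1 + s ^ 2) ^ ((1:ℝ)/2) :=
          Real.rpow_le_rpow (by positivity) (by nlinarith) (by norm_num)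
  rw [show (-(1:ℝ)/2) = -(1/2) by norm_num, Real.rpow_neg (by positivity), one_div y]
  exact inv_anti₀ hy hle

private lemma ratio_bound {m : ℝ → ℝ} {B : ℝ} (hB : 0 < B)
    (hpos : ∀ ξ, 0 < m ξ) (hsm : ContDiff ℝ (⊤ : ℕ∞) m)
    (hd : ∀ ξ, |deriv m ξ| ≤ B * (1 + ξ ^ 2) ^ (-(1:ℝ)/2) * m ξ)
    {y x t : ℝ} (hy : 0 < y) (hxy : x - y ≤ y)
    (ht : t ∈ Set.Icc y x) : m t ≤ Real.exp B * m x := by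
  have hyx : y ≤ x := ht.1.trans ht.2
  set g : ℝ → ℝ := fun s => Real.log (m s) with hg
  have hder : ∀ s : ℝ, HasDerivAt g (deriv m s / m s) s := fun s =>
    ((hsm.differentiable (by simp) s).hasDerivAt).log (hpos s).ne'
  have hgd : ∀ s ∈ Set.Icc y x, DifferentiableAt ℝ g s := fun s _ => (hder s).differentiableAt
  have hbound : ∀ s ∈ Set.Icc y x, ‖deriv g s‖ ≤ B / y := by
    intro s hs
    rw [(hder s).deriv]
    have hms := hpos s
    have h1 := rpow_decay hy hs.1
    calc ‖deriv m s / m s‖ = |deriv m s| / m s := by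
          rw [Real.norm_eq_abs, abs_div, abs_of_pos hms]
      _ ≤ (B * (1 / y) * m s) / m s := by
          gcongr
          exact le_trans (hd s) (by
            apply mul_le_mul_of_nonneg_right _ hms.le
            exact mul_le_mul_of_nonneg_left h1 hB.le)
      _ = B / y := by field_simp
  have hkey := Convex.norm_image_sub_le_of_norm_deriv_le hgd hbound (convex_Icc y x)
    (Set.right_mem_Icc.mpr hyx) ht
  have hdist : ‖t - x‖ ≤ x - y := by
    rw [Real.norm_eq_abs, abs_sub_comm, abs_of_nonneg (by linarith [ht.2])]
    linarith [ht.1]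
  have hfin : g t - g x ≤ B := by
    have h2 : g t - g x ≤ B / y * (x - y) :=
      le_trans (le_abs_self _) (le_trans hkey (mul_le_mul_of_nonneg_left hdist (by positivity)))
    have h3 : B / y * (x - y) ≤ B / y * y := mul_le_mul_of_nonneg_left hxy (by positivity)
    have h4 : B / y * y = B := div_mul_cancel₀ B hy.ne'
    linarith
  calc m t = Real.exp (g t) := (Real.exp_log (hpos t)).symm
    _ ≤ Real.exp (B + g x) := Real.exp_le_exp.mpr (by linarith)
    _ = Real.exp B * m x := by rw [Real.exp_add, hg]; simp [Real.exp_log (hpos x)]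

private lemma num_bound {m : ℝ → ℝ} {B : ℝ} (hB : 0 < B)
    (hpos : ∀ ξ, 0 < m ξ) (hsm : ContDiff ℝ (⊤ : ℕ∞) m)
    (hd : ∀ ξ, |deriv m ξ| ≤ B * (1 + ξ ^ 2) ^ (-(1:ℝ)/2) * m ξ)
    {x y z : ℝ} (hz : 0 < z) (hzy : z ≤ y) (hyx : y ≤ x) (hx4 : x ≤ 4 * y)
    (hsum : x = y + z) :
    |m x * x - m y * y - m z * z| ≤
      (2 + 4 * B * Real.exp B) * max (m x) (max (m y) (m z)) * z := by
  have hy : 0 < y := hz.trans_le hzy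
  have hx : 0 < x := hy.trans_le hyx
  set M := max (m x) (max (m y) (m z)) with hM
  have hMx : m x ≤ M := le_max_left _ _
  have hMy : m y ≤ M := le_trans (le_max_left _ _) (le_max_right _ _)
  have hMz : m z ≤ M := le_trans (le_max_right _ _) (le_max_right _ _)
  have hMpos : 0 < M := lt_of_lt_of_le (hpos x) hMx
  have hxy : x - y ≤ y := by linarith
  have hdb : ∀ s ∈ Set.Icc y x, ‖deriv m s‖ ≤ 4 * B * Real.exp B * M / x := by
    intro s hs
    have hms : m s ≤ Real.exp B * m x := ratio_bound hB hpos hsm hd hy hxy hs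
    have h1 : (1 + s ^ 2) ^ (-(1:ℝ)/2) ≤ 1 / y := rpow_decay hy hs.1
    have h2 : (1:ℝ) / y ≤ 4 / x := by
      rw [div_le_div_iff₀ hy hx]; linarith
    calc ‖deriv m s‖ = |deriv m s| := rfl
      _ ≤ B * (1 + s ^ 2) ^ (-(1:ℝ)/2) * m s := hd s
      _ ≤ B * (4 / x) * (Real.exp B * m x) := by
          apply mul_le_mul _ hms (hpos s).le (by positivity)
          exact mul_le_mul_of_nonneg_left (h1.trans h2) hB.le
      _ ≤ B * (4 / x) * (Real.exp B * M) := by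
          apply mul_le_mul_of_nonneg_left _ (by positivity)
          exact mul_le_mul_of_nonneg_left hMx (Real.exp_pos B).le
      _ = 4 * B * Real.exp B * M / x := by field_simp
  have hmvt := Convex.norm_image_sub_le_of_norm_deriv_le
    (fun s _ => hsm.differentiable (by simp) s) hdb (convex_Icc y x)
    (Set.left_mem_Icc.mpr hyx) (Set.right_mem_Icc.mpr hyx)
  have hmxy : |m x - m y| ≤ 4 * B * Real.exp B * M / x * z := by
    have : ‖x - y‖ = z := by rw [Real.norm_eq_abs, abs_of_nonneg (by linarith)]; linarith
    calc |m x - m y| = ‖m x - m y‖ := rfl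
      _ ≤ 4 * B * Real.exp B * M / x * ‖x - y‖ := hmvt
      _ = 4 * B * Real.exp B * M / x * z := by rw [this]
  have hmyz : |m y - m z| ≤ 2 * M := by
    rw [abs_sub_le_iff]
    constructor <;> linarith [hpos y, hpos z, hMy, hMz]
  have hid : m x * x - m y * y - m z * z = (m x - m y) * x + (m y - m z) * z := by
    rw [hsum]; ring
  calc |m x * x - m y * y - m z * z| ≤ |m x - m y| * x + |m y - m z| * z := by
        rw [hid]
        refine (abs_add_le _ _).trans ?_
        rw [abs_mul, abs_mul, abs_of_pos hx, abs_of_pos hz]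
    _ ≤ (4 * B * Real.exp B * M / x * z) * x + (2 * M) * z := by
        apply add_le_add
        · exact mul_le_mul_of_nonneg_right hmxy hx.le
        · exact mul_le_mul_of_nonneg_right hmyz hz.le
    _ = (2 + 4 * B * Real.exp B) * M * z := by field_simp; ring

private lemma den_bound {a x y z : ℝ} (ha : 1 < a) (hz : 0 < z) (hzy : z ≤ y)
    (hx4 : x ≤ 4 * y) (hsum : x = y + z) :
    a * (x / 4) ^ a * z ≤ x ^ (1 + a) - y ^ (1 + a) - z ^ (1 + a) := by
  have hy : 0 < y := hz.trans_le hzy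
  have hyx : y < x := by linarith
  have hx : 0 < x := hy.trans hyx
  have hderiv : ∀ t : ℝ, HasDerivAt (fun s : ℝ => s ^ (1 + a)) ((1 + a) * t ^ a) t := by
    intro t
    have h := Real.hasDerivAt_rpow_const (p := 1 + a) (x := t) (Or.inr (by linarith))
    rwa [show (1 + a - 1) = a by ring] at h
  have hdiff : Differentiable ℝ fun s : ℝ => s ^ (1 + a : ℝ) := fun t => (hderiv t).differentiableAt
  have hcont : Continuous fun s : ℝ => s ^ (1 + a : ℝ) := hdiff.continuous
  obtain ⟨c, hc, hceq⟩ := exists_hasDerivAt_eq_slope (fun s : ℝ => s ^ (1 + a))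
    (fun t => (1 + a) * t ^ a) hyx hcont.continuousOn (fun t _ => hderiv t)
  have hslope : x ^ (1 + a) - y ^ (1 + a) = (1 + a) * c ^ a * z := by
    rw [hceq, show x - y = z by linarith]
    field_simp
  have hca : y ^ a ≤ c ^ a := Real.rpow_le_rpow hy.le hc.1.le (by linarith)
  have hz' : z ^ (1 + a) ≤ z * y ^ a := by
    rw [Real.rpow_add hz 1 a, Real.rpow_one]
    exact mul_le_mul_of_nonneg_left (Real.rpow_le_rpow hz.le hzy (by linarith)) hz.le
  have hxy4 : (x / 4) ^ a ≤ y ^ a := Real.rpow_le_rpow (by positivity) (by linarith) (by linarith)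
  have k1 : a * ((x / 4) ^ a * z) ≤ a * (y ^ a * z) :=
    mul_le_mul_of_nonneg_left (mul_le_mul_of_nonneg_right hxy4 hz.le) (by linarith)
  have k2 : (1 + a) * (y ^ a * z) ≤ (1 + a) * (c ^ a * z) :=
    mul_le_mul_of_nonneg_left (mul_le_mul_of_nonneg_right hca hz.le) (by linarith)
  nlinarith [hslope, hz', k1, k2]

private lemma core_s10 {m : ℝ → ℝ} {a B : ℝ} (ha : 1 < a) (hB : 0 < B)
    (hpos : ∀ ξ, 0 < m ξ) (hsm : ContDiff ℝ (⊤ : ℕ∞) m)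
    (hd : ∀ ξ, |deriv m ξ| ≤ B * (1 + ξ ^ 2) ^ (-(1:ℝ)/2) * m ξ)
    {x y z : ℝ} (hz : 0 < z) (hzy : z ≤ y) (hyx : y ≤ x) (hx4 : x ≤ 4 * y)
    (hsum : x = y + z) :
    |(m x * x - m y * y - m z * z) / (x ^ (1 + a) - y ^ (1 + a) - z ^ (1 + a))| ≤
      (2 + 4 * B * Real.exp B) * 4 ^ a / a * max (m x) (max (m y) (m z)) / x ^ a := by
  have hy : 0 < y := hz.trans_le hzy
  have hx : 0 < x := hy.trans_le hyx
  have hMpos : 0 < max (m x) (max (m y) (m z)) := lt_of_lt_of_le (hpos x) (le_max_left _ _)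
  have hden := den_bound ha hz hzy hx4 hsum
  have hnum := num_bound hB hpos hsm hd hz hzy hyx hx4 hsum
  have hd0 : 0 < a * (x / 4) ^ a * z := by positivity
  have hDpos : 0 < x ^ (1 + a) - y ^ (1 + a) - z ^ (1 + a) := lt_of_lt_of_le hd0 hden
  rw [abs_div, abs_of_pos hDpos]
  have hxa : (0:ℝ) < x ^ a := Real.rpow_pos_of_pos hx a
  have h4a : (0:ℝ) < (4:ℝ) ^ a := Real.rpow_pos_of_pos (by norm_num) a
  calc |m x * x - m y * y - m z * z| / (x ^ (1 + a) - y ^ (1 + a) - z ^ (1 + a))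
      ≤ ((2 + 4 * B * Real.exp B) * max (m x) (max (m y) (m z)) * z) /
          (a * (x / 4) ^ a * z) := by
        apply div_le_div₀ (by positivity) hnum hd0 hden
    _ = (2 + 4 * B * Real.exp B) * 4 ^ a / a * max (m x) (max (m y) (m z)) / x ^ a := by
        rw [Real.div_rpow hx.le (by norm_num : (0:ℝ) ≤ 4)]
        field_simp


/-- Multiplier bound for the first symmetrization (Lemma 5.4): for a smooth even
positive symbol `m` with `|m′(ξ)| ≤ B(1+ξ²)^{−1/2} m(ξ)`, and nonzero integers
`ξ₃ ≤ ξ₂ ≤ ξ₁ ≤ 4ξ₂` (in absolute value) summing to zero,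
`|b₃(ξ₁,ξ₂,ξ₃)| ≲ max m(ξᵢ) / |ξ₁|^a`. -/
theorem multiplier_bound_b3 (a B : ℝ) (ha1 : 1 < a) (ha2 : a < 2) (hB : 0 < B) :
    ∃ C : ℝ, ∀ m : ℝ → ℝ,
      (∀ ξ, 0 < m ξ) → ContDiff ℝ (⊤ : ℕ∞) m → (∀ ξ, m (-ξ) = m ξ) →
      (∀ ξ, |deriv m ξ| ≤ B * (1 + ξ ^ 2) ^ (-(1:ℝ)/2) * m ξ) →
      ∀ ξ₁ ξ₂ ξ₃ : ℤ, ξ₁ ≠ 0 → ξ₂ ≠ 0 → ξ₃ ≠ 0 → ξ₁ + ξ₂ + ξ₃ = 0 →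
        |(ξ₃ : ℝ)| ≤ |(ξ₂ : ℝ)| → |(ξ₂ : ℝ)| ≤ |(ξ₁ : ℝ)| →
        |(ξ₁ : ℝ)| ≤ 4 * |(ξ₂ : ℝ)| →
        |(m (ξ₁ : ℝ) * (ξ₁ : ℝ) + m (ξ₂ : ℝ) * (ξ₂ : ℝ) + m (ξ₃ : ℝ) * (ξ₃ : ℝ)) /
            (phi a ξ₁ + phi a ξ₂ + phi a ξ₃)|
          ≤ C * max (m (ξ₁ : ℝ)) (max (m (ξ₂ : ℝ)) (m (ξ₃ : ℝ))) / |(ξ₁ : ℝ)| ^ a := by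
  refine ⟨(2 + 4 * B * Real.exp B) * 4 ^ a / a, ?_⟩
  intro m hpos hsm heven hd ξ₁ ξ₂ ξ₃ hne1 hne2 hne3 hsum0 h32 h21 h14
  have habs : ∀ t : ℝ, m |t| = m t := by
    intro t
    rcases abs_cases t with ⟨h, _⟩ | ⟨h, _⟩
    · rw [h]
    · rw [h]; exact heven t
  have h1r : (ξ₁ : ℝ) ≠ 0 := Int.cast_ne_zero.mpr hne1
  have h2r : (ξ₂ : ℝ) ≠ 0 := Int.cast_ne_zero.mpr hne2
  have h3r : (ξ₃ : ℝ) ≠ 0 := Int.cast_ne_zero.mpr hne3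
  have hsumr : (ξ₁ : ℝ) + ξ₂ + ξ₃ = 0 := by exact_mod_cast congrArg (Int.cast : ℤ → ℝ) hsum0
  -- rewrite m values via evenness
  rw [← habs (ξ₁ : ℝ), ← habs (ξ₂ : ℝ), ← habs (ξ₃ : ℝ)]
  set X := |(ξ₁ : ℝ)| with hXdef
  set Y := |(ξ₂ : ℝ)| with hYdef
  set Z := |(ξ₃ : ℝ)| with hZdef
  have hXpos : 0 < X := abs_pos.mpr h1r
  have hYpos : 0 < Y := abs_pos.mpr h2r
  have hZpos : 0 < Z := abs_pos.mpr h3r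
  -- sign analysis and reduction
  have key : (m X * (ξ₁ : ℝ) + m Y * (ξ₂ : ℝ) + m Z * (ξ₃ : ℝ)) /
      (phi a ξ₁ + phi a ξ₂ + phi a ξ₃) =
      (m X * X - m Y * Y - m Z * Z) / (X ^ (1 + a) - Y ^ (1 + a) - Z ^ (1 + a)) ∧
      X = Y + Z := by
    rcases h1r.lt_or_gt with hs1 | hs1
    · -- ξ₁ < 0, so ξ₂ > 0, ξ₃ > 0
      have hx : X = -(ξ₁ : ℝ) := abs_of_neg hs1
      have h2pos : 0 < (ξ₂ : ℝ) := by
        rcases h2r.lt_or_gt with hc | hc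
        · exfalso
          have h3pos : 0 < (ξ₃ : ℝ) := by linarith
          have hz' : Z = (ξ₃ : ℝ) := abs_of_pos h3pos
          have hy' : Y = -(ξ₂ : ℝ) := abs_of_neg hc
          rw [hz', hy'] at h32
          linarith
        · exact hc
      have hy : Y = (ξ₂ : ℝ) := abs_of_pos h2pos
      have h3pos : 0 < (ξ₃ : ℝ) := by
        have hge : 0 ≤ (ξ₃ : ℝ) := by rw [hx, hy] at h21; linarith
        exact lt_of_le_of_ne hge (Ne.symm h3r)
      have hz : Z = (ξ₃ : ℝ) := abs_of_pos h3pos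
      have hXYZ : X = Y + Z := by rw [hx, hy, hz]; linarith
      constructor
      · have hN : m X * (ξ₁ : ℝ) + m Y * (ξ₂ : ℝ) + m Z * (ξ₃ : ℝ) =
            -(m X * X - m Y * Y - m Z * Z) := by
          rw [show (ξ₁ : ℝ) = -X by rw [hx]; ring, show (ξ₂ : ℝ) = Y from hy.symm,
            show (ξ₃ : ℝ) = Z from hz.symm]
          ring
        have hD : phi a ξ₁ + phi a ξ₂ + phi a ξ₃ =
            -(X ^ (1 + a) - Y ^ (1 + a) - Z ^ (1 + a)) := by
          unfold phi
          rw [← hXdef, ← hYdef, ← hZdef]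
          rw [show (ξ₁ : ℝ) = -X by rw [hx]; ring, show (ξ₂ : ℝ) = Y from hy.symm,
            show (ξ₃ : ℝ) = Z from hz.symm]
          rw [Real.rpow_add hXpos 1 a, Real.rpow_add hYpos 1 a, Real.rpow_add hZpos 1 a,
            Real.rpow_one, Real.rpow_one, Real.rpow_one]
          ring
        rw [hN, hD, neg_div_neg_eq]
      · exact hXYZ
    · -- ξ₁ > 0, so ξ₂ < 0, ξ₃ < 0
      have hx : X = (ξ₁ : ℝ) := abs_of_pos hs1
      have h2neg : (ξ₂ : ℝ) < 0 := by
        rcases h2r.lt_or_gt with hc | hc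
        · exact hc
        · exfalso
          have h3neg : (ξ₃ : ℝ) < 0 := by linarith
          have hz' : Z = -(ξ₃ : ℝ) := abs_of_neg h3neg
          have hy' : Y = (ξ₂ : ℝ) := abs_of_pos hc
          rw [hz', hy'] at h32
          linarith
      have hy : Y = -(ξ₂ : ℝ) := abs_of_neg h2neg
      have h3neg : (ξ₃ : ℝ) < 0 := by
        have hle : (ξ₃ : ℝ) ≤ 0 := by rw [hx, hy] at h21; linarith
        exact lt_of_le_of_ne hle h3r
      have hz : Z = -(ξ₃ : ℝ) := abs_of_neg h3neg
      have hXYZ : X = Y + Z := by rw [hx, hy, hz]; linarith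
      constructor
      · have hN : m X * (ξ₁ : ℝ) + m Y * (ξ₂ : ℝ) + m Z * (ξ₃ : ℝ) =
            (m X * X - m Y * Y - m Z * Z) := by
          rw [show (ξ₁ : ℝ) = X from hx.symm, show (ξ₂ : ℝ) = -Y by rw [hy]; ring,
            show (ξ₃ : ℝ) = -Z by rw [hz]; ring]
          ring
        have hD : phi a ξ₁ + phi a ξ₂ + phi a ξ₃ =
            (X ^ (1 + a) - Y ^ (1 + a) - Z ^ (1 + a)) := by
          unfold phi
          rw [← hXdef, ← hYdef, ← hZdef]
          rw [show (ξ₁ : ℝ) = X from hx.symm, show (ξ₂ : ℝ) = -Y by rw [hy]; ring,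
            show (ξ₃ : ℝ) = -Z by rw [hz]; ring]
          rw [Real.rpow_add hXpos 1 a, Real.rpow_add hYpos 1 a, Real.rpow_add hZpos 1 a,
            Real.rpow_one, Real.rpow_one, Real.rpow_one]
          ring
        rw [hN, hD]
      · exact hXYZ
  obtain ⟨hEq, hXYZ⟩ := key
  rw [hEq]
  exact core_s10 ha1 hB hpos hsm hd hZpos h32 h21 h14 hXYZ
end
end
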